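/- Let y be a one-to-one stationary strategy (y(·|s) ≠ y(·|s') for s ≠ s') such that U¹(μ₀,y) ≥ U¹(μ,y) for every μ ∈ M(m). For ε > 0 define the perturbed payoff function ũ¹(s,b) = u¹(s,b) + ε·y(b|s). Then for every ε > 0, the strict inequality Ũ¹(μ₀,y) > Ũ¹(μ,y) holds for every μ ∈ M(m) with μ ≠ μ₀, where Ũ¹ is defined from ũ¹ in the same way as U¹ is defined from u¹. Consequently, every neighborhood of u¹ contains a payoff function for which y satisfies the strict incentive condition. -/

import Mathlib

/-- `μ` is a probability distribution on `S × S` whose two marginals both equal `m`. -/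
def IsCopula {S : Type*} [Fintype S] (m : S → ℝ) (μ : S × S → ℝ) : Prop :=
  (∀ q, 0 ≤ μ q) ∧ (∑ q : S × S, μ q = 1) ∧
    (∀ s, ∑ a, μ (s, a) = m s) ∧ (∀ a, ∑ s, μ (s, a) = m a)

/-- The diagonal copula `μ₀`. -/
def mu0 {S : Type*} [DecidableEq S] (m : S → ℝ) : S × S → ℝ :=
  fun q => if q.1 = q.2 then m q.1 else 0

/-- `y` is a stationary strategy: each `y a` is a probability distribution on `B`. -/
def IsStrategy {S B : Type*} [Fintype B] (y : S → B → ℝ) : Prop :=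
  (∀ a b, 0 ≤ y a b) ∧ ∀ a, ∑ b, y a b = 1

/-- `U(μ, y) = Σ_{(s,a)} μ(s,a) Σ_b y(b|a) u(s,b)`. -/
def Upay {S B : Type*} [Fintype S] [Fintype B]
    (u : S × B → ℝ) (μ : S × S → ℝ) (y : S → B → ℝ) : ℝ :=
  ∑ s, ∑ a, μ (s, a) * ∑ b, y a b * u (s, b)


/-!
Perturbing `u¹` by `ε y` adds `ε Σ μ(s,a) ⟨y(·|a), y(·|s)⟩` to the payoff. Since both marginals of
`μ` are `m`, the gap between this term at `μ₀` and at `μ` equals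
`(ε/2) Σ μ(s,a) ‖y(·|s) - y(·|a)‖²`, which is positive as soon as `μ` charges an off-diagonal pair,
i.e. as soon as `μ ≠ μ₀`, because `y` is one-to-one. Adding it to the weak incentive inequality
for `u¹` makes it strict, and `y ≤ 1` keeps the perturbed payoff `ε`-close to `u¹`.
-/

open Finset Matrix

section Payoff

variable {S B : Type*} [Fintype S] [Fintype B]

lemma upay_add (u v : S × B → ℝ) (μ : S × S → ℝ) (y : S → B → ℝ) :
    Upay (fun q => u q + v q) μ y = Upay u μ y + Upay v μ y := by
  simp only [Upay, mul_add, sum_add_distrib]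

lemma upay_const_mul_strategy (ε : ℝ) (μ : S × S → ℝ) (y : S → B → ℝ) :
    Upay (fun q => ε * y q.1 q.2) μ y = ε * ∑ s, ∑ a, μ (s, a) * (y a ⬝ᵥ y s) := by
  simp only [Upay, dotProduct, mul_sum]
  exact sum_congr rfl fun s _ => sum_congr rfl fun a _ => sum_congr rfl fun b _ => by ring

lemma sum_mu0_mul [DecidableEq S] (m : S → ℝ) (g : S → S → ℝ) :
    ∑ s, ∑ a, mu0 m (s, a) * g s a = ∑ s, m s * g s s := by
  simp [mu0, ite_mul, sum_ite_eq]

end Payoff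

section Copula

variable {S : Type*} [Fintype S]

lemma IsCopula.exists_pos_of_ne_mu0 [DecidableEq S] {m : S → ℝ} {μ : S × S → ℝ}
    (hμ : IsCopula m μ) (hne : μ ≠ mu0 m) : ∃ s a, s ≠ a ∧ 0 < μ (s, a) := by
  obtain ⟨hpos, -, hrow, -⟩ := hμ
  by_contra! hoff
  have hzero : ∀ s a, s ≠ a → μ (s, a) = 0 := fun s a h => (hoff s a h).antisymm (hpos _)
  refine hne (funext fun ⟨s, a⟩ => ?_)
  by_cases hsa : s = a
  · subst hsa
    simp only [mu0, if_true]
    rw [← hrow s, sum_eq_single s (fun a _ h => hzero s a h.symm) (by simp)]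
  · simp [mu0, hsa, hzero s a hsa]

lemma sum_mul_dotProduct_sub_self {R B : Type*} [CommRing R] [Fintype B]
    {m : S → R} {μ : S × S → R} (hrow : ∀ s, ∑ a, μ (s, a) = m s)
    (hcol : ∀ a, ∑ s, μ (s, a) = m a) (y : S → B → R) :
    ∑ s, ∑ a, μ (s, a) * ((y s - y a) ⬝ᵥ (y s - y a)) =
      2 * (∑ s, m s * (y s ⬝ᵥ y s) - ∑ s, ∑ a, μ (s, a) * (y a ⬝ᵥ y s)) := by
  have hexpand : ∀ s a, μ (s, a) * ((y s - y a) ⬝ᵥ (y s - y a)) =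
      μ (s, a) * (y s ⬝ᵥ y s) + μ (s, a) * (y a ⬝ᵥ y a) - 2 * (μ (s, a) * (y a ⬝ᵥ y s)) := by
    intro s a
    simp only [sub_dotProduct, dotProduct_sub, dotProduct_comm (y s) (y a)]
    ring
  have hrow' : ∑ s, ∑ a, μ (s, a) * (y s ⬝ᵥ y s) = ∑ s, m s * (y s ⬝ᵥ y s) := by
    simp only [← sum_mul, hrow]
  have hcol' : ∑ s, ∑ a, μ (s, a) * (y a ⬝ᵥ y a) = ∑ s, m s * (y s ⬝ᵥ y s) := by
    rw [sum_comm]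
    simp only [← sum_mul, hcol]
  simp only [hexpand, sum_sub_distrib, sum_add_distrib, ← mul_sum, hrow', hcol']
  ring

lemma IsCopula.sum_mul_dotProduct_lt [DecidableEq S] {B : Type*} [Fintype B]
    {m : S → ℝ} {μ : S × S → ℝ} (hμ : IsCopula m μ) (hne : μ ≠ mu0 m)
    {y : S → B → ℝ} (hinj : Function.Injective y) :
    ∑ s, ∑ a, μ (s, a) * (y a ⬝ᵥ y s) < ∑ s, m s * (y s ⬝ᵥ y s) := by
  obtain ⟨s₀, a₀, hne₀, hpos₀⟩ := hμ.exists_pos_of_ne_mu0 hne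
  obtain ⟨hpos, -, hrow, hcol⟩ := hμ
  have hsq_nonneg : ∀ v : B → ℝ, 0 ≤ v ⬝ᵥ v := fun v => sum_nonneg fun b _ => mul_self_nonneg _
  have hsq_pos : 0 < (y s₀ - y a₀) ⬝ᵥ (y s₀ - y a₀) :=
    (hsq_nonneg _).lt_of_ne' (dotProduct_self_eq_zero.not.mpr (sub_ne_zero.mpr (hinj.ne hne₀)))
  have hterm : ∀ s a, 0 ≤ μ (s, a) * ((y s - y a) ⬝ᵥ (y s - y a)) :=
    fun s a => mul_nonneg (hpos _) (hsq_nonneg _)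
  have hvar : 0 < ∑ s, ∑ a, μ (s, a) * ((y s - y a) ⬝ᵥ (y s - y a)) :=
    sum_pos' (fun s _ => sum_nonneg fun a _ => hterm s a) ⟨s₀, mem_univ _,
      sum_pos' (fun a _ => hterm s₀ a) ⟨a₀, mem_univ _, mul_pos hpos₀ hsq_pos⟩⟩
  rw [sum_mul_dotProduct_sub_self hrow hcol] at hvar
  linarith

end Copula

lemma IsStrategy.le_one {S B : Type*} [Fintype B] {y : S → B → ℝ} (hy : IsStrategy y)
    (a : S) (b : B) : y a b ≤ 1 :=
  hy.2 a ▸ single_le_sum (fun b _ => hy.1 a b) (mem_univ b)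

lemma IsStrategy.norm_add_const_mul_sub_le {S B : Type*} [Fintype S] [Fintype B]
    {y : S → B → ℝ} (hy : IsStrategy y) (u : S × B → ℝ) {ε : ℝ} (hε : 0 ≤ ε) :
    ‖(fun q => u q + ε * y q.1 q.2) - u‖ ≤ ε := by
  refine (pi_norm_le_iff_of_nonneg hε).mpr fun q => ?_
  rw [Pi.sub_apply, add_sub_cancel_left, Real.norm_eq_abs, abs_of_nonneg (mul_nonneg hε (hy.1 _ _))]
  exact mul_le_of_le_one_right hε (hy.le_one _ _)

lemma upay_add_const_mul_strategy_lt {S B : Type*} [Fintype S] [DecidableEq S] [Fintype B]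
    {m : S → ℝ} {u : S × B → ℝ} {y : S → B → ℝ} (hinj : Function.Injective y)
    {μ : S × S → ℝ} (hμ : IsCopula m μ) (hne : μ ≠ mu0 m)
    (hle : Upay u μ y ≤ Upay u (mu0 m) y) {ε : ℝ} (hε : 0 < ε) :
    Upay (fun q => u q + ε * y q.1 q.2) μ y < Upay (fun q => u q + ε * y q.1 q.2) (mu0 m) y := by
  rw [upay_add u _ μ, upay_add u _ (mu0 m), upay_const_mul_strategy, upay_const_mul_strategy,
    sum_mu0_mul m fun s a => y a ⬝ᵥ y s]
  exact add_lt_add_of_le_of_lt hle (mul_lt_mul_of_pos_left (hμ.sum_mul_dotProduct_lt hne hinj) hε)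

theorem stmt11_general {S B : Type*} [Fintype S] [DecidableEq S]
    [Fintype B]
    (m : S → ℝ)
    (u1 : S × B → ℝ)
    (y : S → B → ℝ) (hy : IsStrategy y) (hinj : Function.Injective y)
    (hC1 : ∀ μ : S × S → ℝ, IsCopula m μ → Upay u1 μ y ≤ Upay u1 (mu0 m) y) :
    (∀ ε : ℝ, 0 < ε →
      ∀ μ : S × S → ℝ, IsCopula m μ → μ ≠ mu0 m →
        Upay (fun q => u1 q + ε * y q.1 q.2) μ y <
          Upay (fun q => u1 q + ε * y q.1 q.2) (mu0 m) y) ∧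
    (∀ δ : ℝ, 0 < δ → ∃ u1' : S × B → ℝ, ‖u1' - u1‖ < δ ∧
      ∀ μ : S × S → ℝ, IsCopula m μ → μ ≠ mu0 m →
        Upay u1' μ y < Upay u1' (mu0 m) y) := by
  have hstrict : ∀ ε : ℝ, 0 < ε → ∀ μ : S × S → ℝ, IsCopula m μ → μ ≠ mu0 m →
      Upay (fun q => u1 q + ε * y q.1 q.2) μ y <
        Upay (fun q => u1 q + ε * y q.1 q.2) (mu0 m) y :=
    fun ε hε μ hμ hne => upay_add_const_mul_strategy_lt hinj hμ hne (hC1 μ hμ) hε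
  refine ⟨hstrict, fun δ hδ => ⟨_, ?_, hstrict (δ / 2) (half_pos hδ)⟩⟩
  exact (hy.norm_add_const_mul_sub_le u1 (half_pos hδ).le).trans_lt (half_lt_self hδ)

theorem stmt11 {S B : Type*} [Fintype S] [DecidableEq S] (hS : 1 < Fintype.card S)
    [Fintype B] [Nonempty B]
    (m : S → ℝ) (hm : ∀ s, 0 < m s) (hm1 : ∑ s, m s = 1)
    (u1 : S × B → ℝ)
    (y : S → B → ℝ) (hy : IsStrategy y) (hinj : Function.Injective y)
    (hC1 : ∀ μ : S × S → ℝ, IsCopula m μ → Upay u1 μ y ≤ Upay u1 (mu0 m) y) :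
    (∀ ε : ℝ, 0 < ε →
      ∀ μ : S × S → ℝ, IsCopula m μ → μ ≠ mu0 m →
        Upay (fun q => u1 q + ε * y q.1 q.2) μ y <
          Upay (fun q => u1 q + ε * y q.1 q.2) (mu0 m) y) ∧
    (∀ δ : ℝ, 0 < δ → ∃ u1' : S × B → ℝ, ‖u1' - u1‖ < δ ∧
      ∀ μ : S × S → ℝ, IsCopula m μ → μ ≠ mu0 m →
        Upay u1' μ y < Upay u1' (mu0 m) y) :=
  stmt11_general m u1 y hy hinj hC1
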